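/- Let E_k and E_j be elementary factors of a lower triangular matrix A with k > j, and C_k = E_k − I, C_j = E_j − I. Then E_k E_j = I + C_k + C_j + a_{k,j} C_k L^{k−j}. -/
import Mathlib

/-- The elementary factor `E_k` of `A`. -/
def elemFactor {n : ℕ} (A : Matrix (Fin n) (Fin n) ℂ) (k : Fin n) :
    Matrix (Fin n) (Fin n) ℂ :=
  Matrix.of fun i j => if j = k then A i j else if i = j then 1 else 0

/-- `C_k = E_k - I`. -/
def Ck {n : ℕ} (A : Matrix (Fin n) (Fin n) ℂ) (k : Fin n) :
    Matrix (Fin n) (Fin n) ℂ :=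
  elemFactor A k - 1

/-- The lower shift matrix `L`, with `L_{k+1,k} = 1`. -/
def shiftL (n : ℕ) : Matrix (Fin n) (Fin n) ℂ :=
  Matrix.of fun i j => if (i : ℕ) = (j : ℕ) + 1 then 1 else 0

lemma shiftL_pow_apply {n : ℕ} (d : ℕ) (i l : Fin n) :
    (shiftL n ^ d) i l = if (i : ℕ) = (l : ℕ) + d then 1 else 0 := by
  induction d generalizing i with
  | zero => simp [Matrix.one_apply, Fin.ext_iff]
  | succ d ih =>
    rw [pow_succ', Matrix.mul_apply]
    rcases Nat.eq_zero_or_pos (i : ℕ) with h0 | hpos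
    · rw [Finset.sum_eq_zero, if_neg (by omega)]
      intro m _
      simp [shiftL, h0]
    · have hi : (i : ℕ) - 1 < n := by omega
      rw [Finset.sum_eq_single ⟨(i : ℕ) - 1, hi⟩]
      · rw [ih, shiftL, Matrix.of_apply, if_pos (by simp only [Fin.val_mk]; omega), one_mul,
          Fin.val_mk]
        have h2 : ((i : ℕ) - 1 = (l : ℕ) + d) ↔ ((i : ℕ) = (l : ℕ) + (d + 1)) := by omega
        simp [h2]
      · intro m _ hm
        rw [shiftL, Matrix.of_apply, if_neg, zero_mul]
        intro h
        exact hm (by simp only [Fin.ext_iff, Fin.val_mk]; omega)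
      · simp

theorem stmt10 {n : ℕ} (A : Matrix (Fin n) (Fin n) ℂ)
    (hlow : ∀ i j : Fin n, i < j → A i j = 0) (j k : Fin n) (hjk : j < k) :
    elemFactor A k * elemFactor A j =
      1 + Ck A k + Ck A j + A k j • (Ck A k * shiftL n ^ ((k : ℕ) - (j : ℕ))) := by
  have hEk : elemFactor A k = 1 + Ck A k := by rw [Ck, add_sub_cancel]
  have hEj : elemFactor A j = 1 + Ck A j := by rw [Ck, add_sub_cancel]
  have hkj : k ≠ j := hjk.ne'
  have hjk' : (j : ℕ) < (k : ℕ) := hjk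
  have hmain : Ck A k * Ck A j = A k j • (Ck A k * shiftL n ^ ((k : ℕ) - (j : ℕ))) := by
    ext i l
    rw [Matrix.smul_apply, Matrix.mul_apply, Matrix.mul_apply, Finset.smul_sum]
    refine Finset.sum_congr rfl fun m _ => ?_
    rcases eq_or_ne m k with hmk | hm
    · subst hmk
      simp only [Ck, Matrix.sub_apply, elemFactor, Matrix.of_apply, Matrix.one_apply,
        shiftL_pow_apply, smul_eq_mul]
      have hk : ((m : ℕ) = (l : ℕ) + ((m : ℕ) - (j : ℕ))) ↔ l = j := by
        rw [Fin.ext_iff]; omega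
      by_cases hl : l = j
      · subst hl
        rw [if_pos (hk.mpr rfl)]
        simp only [if_true, eq_self_iff_true, if_neg hkj]
        ring
      · rw [if_neg hl, if_neg (fun h => hl (hk.mp h))]
        simp
    · have hz : Ck A k i m = 0 := by
        simp [Ck, elemFactor, Matrix.one_apply, hm]
      rw [hz, zero_mul, zero_mul, smul_zero]
  rw [hEk, hEj, add_mul, one_mul, mul_add, mul_one, hmain]
  abel
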